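/- If λ0 > 0 and α²λ0² + λ1² + 2λ0λ2 < 0 (equivalently λ2 < −(α²λ0² + λ1²)/(2λ0)), then the origin of ℝ⁶ is a Lyapunov-stable equilibrium of the transformed system: X_T(0) = 0, and for every ε > 0 there is δ > 0 such that every solution with initial value of norm less than δ remains of norm less than ε for all t ≥ 0. -/

import Mathlib

noncomputable section

/-- The transformed system (Kirchhoff's equations in Sokolov's case after a linear
change of variables, β = 0): the polynomial vector field on ℝ⁶ with coordinates
(s1, s2, s3, r1, r2, r3) and real parameter α. -/
noncomputable def XT (α : ℝ) : ℝ × ℝ × ℝ × ℝ × ℝ × ℝ → ℝ × ℝ × ℝ × ℝ × ℝ × ℝ :=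
  fun (s1, s2, s3, r1, r2, r3) =>
    ((α * r1 + s3) * s2 - α ^ 2 * r2 * r3,
     (α * r3 - s1) * (α * r1 + s3),
     -(α * r2 * s3),
     (α * r1 + 2 * s3) * r2 - r3 * s2,
     r3 * s1 - r1 * (α * r1 + 2 * s3),
     r1 * s2 - r2 * s1)

/-- Lyapunov function. -/
def LF (α : ℝ) (x : ℝ × ℝ × ℝ × ℝ × ℝ × ℝ) : ℝ :=
  1/2 * (x.1 * x.1) + 1/2 * (x.2.1 * x.2.1) + x.2.2.1 * x.2.2.1
    + α * (x.2.2.2.1 * x.2.2.1)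
    + (α^2 + 1) * (x.2.2.2.1 * x.2.2.2.1 + (x.2.2.2.2.1 * x.2.2.2.2.1 + x.2.2.2.2.2 * x.2.2.2.2.2))
    - (1/2 * α^2) * (x.2.2.2.2.2 * x.2.2.2.2.2)

lemma keyderiv (α : ℝ) (g1 g2 g3 g4 g5 g6 : ℝ → ℝ) (t : ℝ)
    (h1 : HasDerivAt g1 ((α * g4 t + g3 t) * g2 t - α ^ 2 * g5 t * g6 t) t)
    (h2 : HasDerivAt g2 ((α * g6 t - g1 t) * (α * g4 t + g3 t)) t)
    (h3 : HasDerivAt g3 (-(α * g5 t * g3 t)) t)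
    (h4 : HasDerivAt g4 ((α * g4 t + 2 * g3 t) * g5 t - g6 t * g2 t) t)
    (h5 : HasDerivAt g5 (g6 t * g1 t - g4 t * (α * g4 t + 2 * g3 t)) t)
    (h6 : HasDerivAt g6 (g4 t * g2 t - g5 t * g1 t) t) :
    HasDerivAt (fun u => 1/2 * (g1 u * g1 u) + 1/2 * (g2 u * g2 u) + g3 u * g3 u
      + α * (g4 u * g3 u)
      + (α^2 + 1) * (g4 u * g4 u + (g5 u * g5 u + g6 u * g6 u))
      - (1/2 * α^2) * (g6 u * g6 u)) 0 t := by
  have H := ((((((h1.mul h1).const_mul (1/2 : ℝ)).add ((h2.mul h2).const_mul (1/2 : ℝ))).add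
      (h3.mul h3)).add ((h4.mul h3).const_mul α)).add
      (((h4.mul h4).add ((h5.mul h5).add (h6.mul h6))).const_mul (α^2 + 1))).sub
      ((h6.mul h6).const_mul (1/2 * α^2))
  exact H.congr_deriv (by ring)

lemma comp_bounds (x : ℝ × ℝ × ℝ × ℝ × ℝ × ℝ) :
    |x.1| ≤ ‖x‖ ∧ |x.2.1| ≤ ‖x‖ ∧ |x.2.2.1| ≤ ‖x‖ ∧ |x.2.2.2.1| ≤ ‖x‖ ∧
      |x.2.2.2.2.1| ≤ ‖x‖ ∧ |x.2.2.2.2.2| ≤ ‖x‖ := by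
  have a2 : ‖x.2‖ ≤ ‖x‖ := norm_snd_le x
  have a3 : ‖x.2.2‖ ≤ ‖x‖ := le_trans (norm_snd_le x.2) a2
  have a4 : ‖x.2.2.2‖ ≤ ‖x‖ := le_trans (norm_snd_le x.2.2) a3
  have a5 : ‖x.2.2.2.2‖ ≤ ‖x‖ := le_trans (norm_snd_le x.2.2.2) a4
  refine ⟨norm_fst_le x, le_trans (norm_fst_le x.2) a2, le_trans (norm_fst_le x.2.2) a3,
    le_trans (norm_fst_le x.2.2.2) a4, le_trans (norm_fst_le x.2.2.2.2) a5,
    le_trans (norm_snd_le x.2.2.2.2) a5⟩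

lemma sup_sq_le (a b : ℝ) : (a ⊔ b)^2 ≤ a^2 + b^2 := by
  rcases le_total a b with h | h
  · rw [max_eq_right h]; nlinarith [sq_nonneg a]
  · rw [max_eq_left h]; nlinarith [sq_nonneg b]

lemma norm_sq_le_sum (x : ℝ × ℝ × ℝ × ℝ × ℝ × ℝ) :
    ‖x‖^2 ≤ x.1^2 + x.2.1^2 + x.2.2.1^2 + x.2.2.2.1^2 + x.2.2.2.2.1^2 + x.2.2.2.2.2^2 := by
  have h : ‖x‖ = |x.1| ⊔ (|x.2.1| ⊔ (|x.2.2.1| ⊔ (|x.2.2.2.1| ⊔ (|x.2.2.2.2.1| ⊔ |x.2.2.2.2.2|)))) := by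
    simp [Prod.norm_def, Real.norm_eq_abs]
  rw [h]
  have c1 := sup_sq_le |x.1| (|x.2.1| ⊔ (|x.2.2.1| ⊔ (|x.2.2.2.1| ⊔ (|x.2.2.2.2.1| ⊔ |x.2.2.2.2.2|))))
  have c2 := sup_sq_le |x.2.1| (|x.2.2.1| ⊔ (|x.2.2.2.1| ⊔ (|x.2.2.2.2.1| ⊔ |x.2.2.2.2.2|)))
  have c3 := sup_sq_le |x.2.2.1| (|x.2.2.2.1| ⊔ (|x.2.2.2.2.1| ⊔ |x.2.2.2.2.2|))
  have c4 := sup_sq_le |x.2.2.2.1| (|x.2.2.2.2.1| ⊔ |x.2.2.2.2.2|)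
  have c5 := sup_sq_le |x.2.2.2.2.1| |x.2.2.2.2.2|
  have d1 := sq_abs x.1; have d2 := sq_abs x.2.1; have d3 := sq_abs x.2.2.1
  have d4 := sq_abs x.2.2.2.1; have d5 := sq_abs x.2.2.2.2.1; have d6 := sq_abs x.2.2.2.2.2
  nlinarith [sq_nonneg x.1, sq_nonneg x.2.1, sq_nonneg x.2.2.1, sq_nonneg x.2.2.2.1,
    sq_nonneg x.2.2.2.2.1, sq_nonneg x.2.2.2.2.2]

set_option maxHeartbeats 1000000 in
/-- If λ0 > 0 and α²λ0² + λ1² + 2λ0λ2 < 0 (i.e. λ2 < −(α²λ0² + λ1²)/(2λ0)), the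
origin of ℝ⁶ is a Lyapunov-stable equilibrium of the transformed system: X_T(0) = 0,
and for every ε > 0 there is δ > 0 such that every solution with initial value of
norm less than δ remains of norm less than ε for all t ≥ 0. -/
theorem origin_lyapunov_stable (α lam0 lam1 lam2 : ℝ)
    (h0 : 0 < lam0) (hcond : α ^ 2 * lam0 ^ 2 + lam1 ^ 2 + 2 * lam0 * lam2 < 0) :
    XT α 0 = 0 ∧
    ∀ ε > (0 : ℝ), ∃ δ > (0 : ℝ), ∀ c : ℝ → ℝ × ℝ × ℝ × ℝ × ℝ × ℝ,
      (∀ t : ℝ, 0 ≤ t → HasDerivAt c (XT α (c t)) t) →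
      ‖c 0‖ < δ → ∀ t : ℝ, 0 ≤ t → ‖c t‖ < ε := by
  constructor
  · show XT α (0, 0, 0, 0, 0, 0) = (0, 0, 0, 0, 0, 0)
    simp [XT]
  · intro ε hε
    refine ⟨ε / (13 * (1 + |α|)), by positivity, ?_⟩
    intro c hc hc0 t ht
    -- the Lyapunov function is conserved along solutions
    have hg : ∀ u : ℝ, 0 ≤ u → HasDerivAt (fun v => LF α (c v)) 0 u := by
      intro u hu
      have h := hc u hu
      have hs : HasDerivAt (fun v => (c v).2) (XT α (c u)).2 u :=
        hasFDerivAt_snd.comp_hasDerivAt (f := c) u h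
      have hs2 : HasDerivAt (fun v => (c v).2.2) (XT α (c u)).2.2 u :=
        hasFDerivAt_snd.comp_hasDerivAt (f := fun v => (c v).2) u hs
      have hs3 : HasDerivAt (fun v => (c v).2.2.2) (XT α (c u)).2.2.2 u :=
        hasFDerivAt_snd.comp_hasDerivAt (f := fun v => (c v).2.2) u hs2
      have hs4 : HasDerivAt (fun v => (c v).2.2.2.2) (XT α (c u)).2.2.2.2 u :=
        hasFDerivAt_snd.comp_hasDerivAt (f := fun v => (c v).2.2.2) u hs3
      exact keyderiv α (fun v => (c v).1) (fun v => (c v).2.1) (fun v => (c v).2.2.1)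
        (fun v => (c v).2.2.2.1) (fun v => (c v).2.2.2.2.1) (fun v => (c v).2.2.2.2.2) u
        (hasFDerivAt_fst.comp_hasDerivAt (f := c) u h)
        (hasFDerivAt_fst.comp_hasDerivAt (f := fun v => (c v).2) u hs)
        (hasFDerivAt_fst.comp_hasDerivAt (f := fun v => (c v).2.2) u hs2)
        (hasFDerivAt_fst.comp_hasDerivAt (f := fun v => (c v).2.2.2) u hs3)
        (hasFDerivAt_fst.comp_hasDerivAt (f := fun v => (c v).2.2.2.2) u hs4)
        (hasFDerivAt_snd.comp_hasDerivAt (f := fun v => (c v).2.2.2.2) u hs4)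
    have hconst : LF α (c t) = LF α (c 0) := by
      have := constant_of_has_deriv_right_zero (f := fun v => LF α (c v)) (a := 0) (b := t)
        (fun u hu => ((hg u hu.1).continuousAt.continuousWithinAt))
        (fun u hu => (hg u hu.1).hasDerivWithinAt)
      exact this t ⟨ht, le_refl t⟩
    -- quadratic bounds for LF
    have hlow : ∀ x : ℝ × ℝ × ℝ × ℝ × ℝ × ℝ,
        x.1^2 + x.2.1^2 + x.2.2.1^2 + x.2.2.2.1^2 + x.2.2.2.2.1^2 + x.2.2.2.2.2^2
          ≤ 2 * LF α x := by
      intro x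
      simp only [LF]
      nlinarith [sq_nonneg (x.2.2.1 + α * x.2.2.2.1), sq_nonneg x.2.2.2.1,
        sq_nonneg x.2.2.2.2.1, sq_nonneg x.2.2.2.2.2,
        mul_nonneg (sq_nonneg α) (sq_nonneg x.2.2.2.1),
        mul_nonneg (sq_nonneg α) (sq_nonneg x.2.2.2.2.1),
        mul_nonneg (sq_nonneg α) (sq_nonneg x.2.2.2.2.2)]
    have hup : ∀ x : ℝ × ℝ × ℝ × ℝ × ℝ × ℝ,
        LF α x ≤ 2 * (α^2 + 1) *
          (x.1^2 + x.2.1^2 + x.2.2.1^2 + x.2.2.2.1^2 + x.2.2.2.2.1^2 + x.2.2.2.2.2^2) := by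
      intro x
      simp only [LF]
      nlinarith [sq_nonneg (α * x.2.2.2.1 - x.2.2.1), sq_nonneg x.1, sq_nonneg x.2.1,
        sq_nonneg x.2.2.1, sq_nonneg x.2.2.2.2.1, sq_nonneg x.2.2.2.2.2,
        mul_nonneg (sq_nonneg α) (sq_nonneg x.1), mul_nonneg (sq_nonneg α) (sq_nonneg x.2.1),
        mul_nonneg (sq_nonneg α) (sq_nonneg x.2.2.1),
        mul_nonneg (sq_nonneg α) (sq_nonneg x.2.2.2.1),
        mul_nonneg (sq_nonneg α) (sq_nonneg x.2.2.2.2.1),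
        mul_nonneg (sq_nonneg α) (sq_nonneg x.2.2.2.2.2)]
    have hsumnorm : ∀ x : ℝ × ℝ × ℝ × ℝ × ℝ × ℝ,
        x.1^2 + x.2.1^2 + x.2.2.1^2 + x.2.2.2.1^2 + x.2.2.2.2.1^2 + x.2.2.2.2.2^2 ≤ 6 * ‖x‖^2 := by
      intro x
      obtain ⟨b1, b2, b3, b4, b5, b6⟩ := comp_bounds x
      have q1 := pow_le_pow_left₀ (abs_nonneg x.1) b1 2
      have q2 := pow_le_pow_left₀ (abs_nonneg x.2.1) b2 2
      have q3 := pow_le_pow_left₀ (abs_nonneg x.2.2.1) b3 2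
      have q4 := pow_le_pow_left₀ (abs_nonneg x.2.2.2.1) b4 2
      have q5 := pow_le_pow_left₀ (abs_nonneg x.2.2.2.2.1) b5 2
      have q6 := pow_le_pow_left₀ (abs_nonneg x.2.2.2.2.2) b6 2
      have d1 := sq_abs x.1; have d2 := sq_abs x.2.1; have d3 := sq_abs x.2.2.1
      have d4 := sq_abs x.2.2.2.1; have d5 := sq_abs x.2.2.2.2.1; have d6 := sq_abs x.2.2.2.2.2
      linarith
    -- put everything together
    have key : ‖c t‖^2 ≤ 144 * (α^2 + 1) * ‖c 0‖^2 := by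
      have e1 := norm_sq_le_sum (c t)
      have e2 := hlow (c t)
      have e3 := hup (c 0)
      have e4 := hsumnorm (c 0)
      have e5 : 2 * (α^2 + 1) *
          ((c 0).1^2 + (c 0).2.1^2 + (c 0).2.2.1^2 + (c 0).2.2.2.1^2 + (c 0).2.2.2.2.1^2 + (c 0).2.2.2.2.2^2)
          ≤ 2 * (α^2 + 1) * (6 * ‖c 0‖^2) :=
        mul_le_mul_of_nonneg_left e4 (by positivity)
      have e6 : (0:ℝ) ≤ 132 * (α^2 + 1) * ‖c 0‖^2 := by positivity
      nlinarith [hconst]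
    have hδ : ‖c 0‖ < ε / (13 * (1 + |α|)) := hc0
    have habs : |α| ^ 2 = α ^ 2 := sq_abs α
    have hαn : (0:ℝ) ≤ |α| := abs_nonneg α
    have hn0 : (0:ℝ) ≤ ‖c 0‖ := norm_nonneg _
    have hnt : (0:ℝ) ≤ ‖c t‖ := norm_nonneg _
    have h13 : (0:ℝ) < 13 * (1 + |α|) := by positivity
    have hsq : ‖c t‖^2 < ε^2 := by
      have h1 : ‖c 0‖ * (13 * (1 + |α|)) < ε := (lt_div_iff₀ h13).mp hδ
      have h2 : 144 * (α^2 + 1) * ‖c 0‖^2 < ε^2 := by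
        nlinarith [mul_nonneg hn0 hαn, sq_nonneg (‖c 0‖ * |α|), sq_nonneg ‖c 0‖]
      linarith
    nlinarith [hsq, hnt, hε]
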